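/- arXiv:math/0703456 — 4 statements merged into one kernel-verified Lean document; each statement's English description precedes it below -/
import Mathlib

section
/- Let Δ_1, …, Δ_r and ∇_1, …, ∇_r be dual to each other centered nef-partitions in ℝ^d, with Δ = Δ_1 + ⋯ + Δ_r and Δ* = {y ∈ ℝ^d : ⟨x,y⟩ ≥ −1 for all x ∈ Δ}. Then for every i = 1, …, r, the set of nonzero vertices of ∇_i equals {v ∈ V(Δ*) : min_{u ∈ Δ_i} ⟨u,v⟩ = −1}, where V(Δ*) denotes the vertex set (set of extreme points) of Δ*. -/
open Pointwise

noncomputable section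

/-- A point of `ℝ^n` all of whose coordinates are integers (a lattice point of `ℤ^n`). -/
def IsLatticePt {n : ℕ} (x : Fin n → ℝ) : Prop := ∀ k, ∃ m : ℤ, x k = (m : ℝ)

/-- A lattice polytope: the convex hull of finitely many lattice points. -/
def IsLatticePoly {n : ℕ} (P : Set (Fin n → ℝ)) : Prop :=
  ∃ V : Finset (Fin n → ℝ), V.Nonempty ∧ (∀ v ∈ V, IsLatticePt v) ∧
    P = convexHull ℝ (V : Set (Fin n → ℝ))

/-- The standard inner product pairing on `ℝ^n`. -/
def pairR {n : ℕ} (x y : Fin n → ℝ) : ℝ := ∑ k, x k * y k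

/-- The dual polytope `P* = {y : ⟨x,y⟩ ≥ -1 ∀ x ∈ P}`. -/
def dualPoly {n : ℕ} (P : Set (Fin n → ℝ)) : Set (Fin n → ℝ) :=
  {y | ∀ x ∈ P, -1 ≤ pairR x y}

/-- A reflexive polytope: a lattice polytope with `0` in its interior whose dual
polytope is again a lattice polytope. -/
def IsReflexivePoly {n : ℕ} (P : Set (Fin n → ℝ)) : Prop :=
  IsLatticePoly P ∧ (0 : Fin n → ℝ) ∈ interior P ∧ IsLatticePoly (dualPoly P)

/-- The dimension of a polytope: the dimension of the direction of its affine span. -/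
def polyDim {n : ℕ} (P : Set (Fin n → ℝ)) : ℕ :=
  Module.finrank ℝ (affineSpan ℝ P).direction

/-- A (full-dimensional) Gorenstein polytope of index `r`: `rP` has `m` as its unique
interior lattice point and `rP - m` is reflexive. -/
def IsGorensteinPoly {n : ℕ} (P : Set (Fin n → ℝ)) (r : ℕ) (m : Fin n → ℝ) : Prop :=
  IsLatticePoly P ∧ IsLatticePt m ∧
  (∀ x, IsLatticePt x → (x ∈ interior ((r : ℝ) • P) ↔ x = m)) ∧
  IsReflexivePoly ((fun x => x - m) '' ((r : ℝ) • P))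

/-- `y` is a point of the lattice dual to the (saturated) lattice `ℤ^n ∩ W` inside `W`. -/
def IsDualLatticePt {n : ℕ} (W : Submodule ℝ (Fin n → ℝ)) (y : Fin n → ℝ) : Prop :=
  y ∈ W ∧ ∀ x ∈ W, IsLatticePt x → ∃ m : ℤ, pairR x y = (m : ℝ)

/-- Reflexivity of a (possibly lower-dimensional) lattice polytope inside its linear
span: `0` is in the relative interior and the dual polytope taken inside the linear
span is a lattice polytope with respect to the dual lattice. -/
def IsReflexiveIn {n : ℕ} (P : Set (Fin n → ℝ)) : Prop :=
  IsLatticePoly P ∧ (0 : Fin n → ℝ) ∈ intrinsicInterior ℝ P ∧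
  ∃ V : Finset (Fin n → ℝ), V.Nonempty ∧
    (∀ v ∈ V, IsDualLatticePt (Submodule.span ℝ P) v) ∧
    {y | y ∈ Submodule.span ℝ P ∧ ∀ x ∈ P, -1 ≤ pairR x y} =
      convexHull ℝ (V : Set (Fin n → ℝ))

/-- Gorenstein polytope of index `r` (possibly lower-dimensional): `rP` has `m` as its
unique relative-interior lattice point and `rP - m` is reflexive within its span. -/
def IsGorensteinIn {n : ℕ} (P : Set (Fin n → ℝ)) (r : ℕ) (m : Fin n → ℝ) : Prop :=
  IsLatticePoly P ∧ IsLatticePt m ∧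
  (∀ x, IsLatticePt x → (x ∈ intrinsicInterior ℝ ((r : ℝ) • P) ↔ x = m)) ∧
  IsReflexiveIn ((fun x => x - m) '' ((r : ℝ) • P))

/-- The Minkowski sum `Δ 0 + ⋯ + Δ (r-1)` of a family of sets. -/
def minkSum {n r : ℕ} (Δ : Fin r → Set (Fin n → ℝ)) : Set (Fin n → ℝ) :=
  {x | ∃ f : Fin r → (Fin n → ℝ), (∀ i, f i ∈ Δ i) ∧ x = ∑ i, f i}

/-- The Minkowski sum `Σ_{i ∈ I} Δ i`. -/
def minkSumOver {n r : ℕ} (I : Finset (Fin r)) (Δ : Fin r → Set (Fin n → ℝ)) :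
    Set (Fin n → ℝ) :=
  {x | ∃ f : Fin r → (Fin n → ℝ), (∀ i ∈ I, f i ∈ Δ i) ∧ x = ∑ i ∈ I, f i}

/-- The point `x × e_i ∈ ℝ^d × ℝ^r`. -/
def cayleyPt {d r : ℕ} (x : Fin d → ℝ) (i : Fin r) : Fin (d + r) → ℝ :=
  Fin.append x (fun j => if j = i then 1 else 0)

/-- The Cayley polytope `Δ 0 * ⋯ * Δ (r-1) ⊂ ℝ^d × ℝ^r`. -/
def cayley {d r : ℕ} (Δ : Fin r → Set (Fin d → ℝ)) : Set (Fin (d + r) → ℝ) :=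
  convexHull ℝ (⋃ i, (fun x => cayleyPt x i) '' Δ i)

/-- `F` is a facet of `P`: a nonempty exposed face of dimension one less. -/
def IsFacetOf {n : ℕ} (F P : Set (Fin n → ℝ)) : Prop :=
  IsExposed ℝ P F ∧ F.Nonempty ∧ polyDim F + 1 = polyDim P

/-- A special `(r-1)`-simplex of `P`: `r` affinely independent lattice points of `P`
such that every facet of `P` contains exactly `r - 1` of them. -/
def IsSpecialSimplex {n : ℕ} (P : Set (Fin n → ℝ)) (r : ℕ) (v : Fin r → Fin n → ℝ) : Prop :=
  (∀ i, IsLatticePt (v i) ∧ v i ∈ P) ∧ AffineIndependent ℝ v ∧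
  ∀ F, IsFacetOf F P → ∃! i, v i ∉ F

/-- `∇_i = {y : ⟨x,y⟩ ≥ -δ_{ij} ∀ x ∈ Δ_j ∀ j}`, the polytopes of the dual nef-partition. -/
def nefDual {d r : ℕ} (Δ : Fin r → Set (Fin d → ℝ)) (i : Fin r) : Set (Fin d → ℝ) :=
  {y | ∀ j, ∀ x ∈ Δ j, -(if i = j then (1 : ℝ) else 0) ≤ pairR x y}

/-- A centered nef-partition: lattice polytopes containing `0` whose Minkowski sum is a
reflexive polytope with `0` as its unique interior lattice point. -/
def IsCenteredNefPartition {d r : ℕ} (Δ : Fin r → Set (Fin d → ℝ)) : Prop :=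
  (∀ i, IsLatticePoly (Δ i) ∧ (0 : Fin d → ℝ) ∈ Δ i) ∧
  IsReflexivePoly (minkSum Δ) ∧
  ∀ x, IsLatticePt x → x ∈ interior (minkSum Δ) → x = 0

/-- Two centered nef-partitions dual to each other. -/
def AreDualNefPartitions {d r : ℕ} (Δ Nb : Fin r → Set (Fin d → ℝ)) : Prop :=
  IsCenteredNefPartition Δ ∧ IsCenteredNefPartition Nb ∧
  (∀ i, Nb i = nefDual Δ i) ∧ (∀ i, Δ i = nefDual Nb i)

/-- A Gorenstein cone with its distinguished lattice point `nσ`: a full-dimensional cone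
generated by finitely many lattice points on the hyperplane `⟨·, nσ⟩ = 1`. -/
def IsGorensteinCone {n : ℕ} (σ : Set (Fin n → ℝ)) (nσ : Fin n → ℝ) : Prop :=
  IsLatticePt nσ ∧ Submodule.span ℝ σ = ⊤ ∧
  ∃ V : Finset (Fin n → ℝ), V.Nonempty ∧
    (∀ v ∈ V, IsLatticePt v ∧ pairR v nσ = 1) ∧
    σ = {x | ∃ c : (Fin n → ℝ) → ℝ, (∀ v, 0 ≤ c v) ∧ x = ∑ v ∈ V, c v • v}

/-- The dual cone. -/
def dualCone {n : ℕ} (σ : Set (Fin n → ℝ)) : Set (Fin n → ℝ) :=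
  {y | ∀ x ∈ σ, 0 ≤ pairR x y}

/-- Integrally closed lattice polytope: every lattice point of `k • P` is a sum of `k`
lattice points of `P`. -/
def IntegrallyClosed {n : ℕ} (P : Set (Fin n → ℝ)) : Prop :=
  ∀ (k : ℕ) (x : Fin n → ℝ), IsLatticePt x → x ∈ (k : ℝ) • P →
    ∃ v : Fin k → (Fin n → ℝ), (∀ j, IsLatticePt (v j) ∧ v j ∈ P) ∧ x = ∑ j, v j

/-!
Since every `Δ_j` contains `0`, `∇_i ⊆ Δ*`, and for `u ∈ Δ_i` the face
`{y ∈ Δ* | ⟨u, y⟩ = -1}` of `Δ*` lies in `∇_i` (pair `y` with `u + x` for `x ∈ Δ_j`).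
A nonzero vertex `v` of `∇_i` attains `min_{Δ_i} ⟨·, v⟩ = -1`: otherwise a slight stretch
of `v` stays in `∇_i`, so `v` lies inside a segment from `0`. Hence `v` lies on such a face and
is a vertex of `Δ*`. Conversely, a vertex of `Δ*` on such a face lies in `∇_i ⊆ Δ*` and so is
a vertex of `∇_i`.
-/

open Set

lemma pairR_eq_dotProduct {n : ℕ} (x y : Fin n → ℝ) : pairR x y = x ⬝ᵥ y := rfl

section Convex

variable {E : Type*} [AddCommGroup E] [Module ℝ E]

lemma isExtreme_setOf_eq_of_forall_le {A : Set E} (f : E →ₗ[ℝ] ℝ) {c : ℝ}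
    (hA : ∀ x ∈ A, c ≤ f x) : IsExtreme ℝ A {x ∈ A | f x = c} := by
  refine ⟨sep_subset _ _, fun x₁ hx₁ x₂ hx₂ x ⟨_, hxc⟩ ⟨a, b, ha, hb, hab, hx⟩ => ⟨hx₁, ?_⟩⟩
  have hsum : a * f x₁ + b * f x₂ = c := by simp [← hxc, ← hx]
  have hc : c = a * c + b * c := by rw [← add_mul, hab, one_mul]
  have hfc : a * f x₁ ≤ a * c := by
    linarith [mul_le_mul_of_nonneg_left (hA x₂ hx₂) hb.le]
  exact le_antisymm (le_of_mul_le_mul_left hfc ha) (hA x₁ hx₁)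

lemma eq_zero_of_mem_extremePoints_of_smul_mem {A : Set E} {v : E} {t : ℝ}
    (hv : v ∈ A.extremePoints ℝ) (h0 : (0 : E) ∈ A) (ht : 1 < t) (htv : t • v ∈ A) :
    v = 0 := by
  have ht0 : 0 < t := by linarith
  refine (hv.2 h0 htv ⟨1 - t⁻¹, t⁻¹, sub_pos.2 (inv_lt_one_of_one_lt₀ ht), inv_pos.2 ht0,
    by ring, ?_⟩).symm
  rw [smul_zero, zero_add, smul_smul, inv_mul_cancel₀ ht0.ne', one_smul]

end Convex

section NefPartition

variable {d r : ℕ} {Δ : Fin r → Set (Fin d → ℝ)}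

lemma mem_minkSum_of_mem (h0 : ∀ j, (0 : Fin d → ℝ) ∈ Δ j) {i : Fin r} {u : Fin d → ℝ}
    (hu : u ∈ Δ i) : u ∈ minkSum Δ := by
  classical
  refine ⟨Pi.single i u, fun j => ?_, by simp⟩
  rcases eq_or_ne j i with rfl | hj
  · simpa using hu
  · simpa [hj] using h0 j

lemma add_mem_minkSum (h0 : ∀ j, (0 : Fin d → ℝ) ∈ Δ j) {i j : Fin r} (hij : i ≠ j)
    {u x : Fin d → ℝ} (hu : u ∈ Δ i) (hx : x ∈ Δ j) : u + x ∈ minkSum Δ := by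
  classical
  refine ⟨Pi.single i u + Pi.single j x, fun k => ?_, by simp [Finset.sum_add_distrib]⟩
  rcases eq_or_ne k i with rfl | hki
  · simpa [hij] using hu
  rcases eq_or_ne k j with rfl | hkj
  · simpa [hki] using hx
  · simpa [hki, hkj] using h0 k

lemma zero_mem_nefDual (i : Fin r) : (0 : Fin d → ℝ) ∈ nefDual Δ i := by
  intro j x _
  split_ifs <;> simp [pairR_eq_dotProduct]

lemma nefDual_subset_dualPoly_minkSum (i : Fin r) : nefDual Δ i ⊆ dualPoly (minkSum Δ) := by
  rintro y hy _ ⟨f, hf, rfl⟩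
  calc (-1 : ℝ) = ∑ j, -(if i = j then (1 : ℝ) else 0) := by simp
    _ ≤ ∑ j, pairR (f j) y := Finset.sum_le_sum fun j _ => hy j _ (hf j)
    _ = pairR (∑ j, f j) y := (sum_dotProduct _ _ _).symm

lemma mem_nefDual_of_pairR_eq_neg_one (h0 : ∀ j, (0 : Fin d → ℝ) ∈ Δ j) {i : Fin r}
    {u y : Fin d → ℝ} (hu : u ∈ Δ i) (huy : pairR u y = -1)
    (hy : y ∈ dualPoly (minkSum Δ)) : y ∈ nefDual Δ i := by
  intro j x hx
  rcases eq_or_ne i j with rfl | hij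
  · simpa using hy x (mem_minkSum_of_mem h0 hx)
  · have := hy _ (add_mem_minkSum h0 hij hu hx)
    simp only [pairR_eq_dotProduct, add_dotProduct, hij, if_false, neg_zero] at this huy ⊢
    linarith

lemma smul_mem_nefDual {i : Fin r} {v : Fin d → ℝ} {t : ℝ} (hv : v ∈ nefDual Δ i)
    (ht : 0 ≤ t) (hi : ∀ u ∈ Δ i, -1 ≤ t * pairR u v) : t • v ∈ nefDual Δ i := by
  intro j x hx
  rw [pairR_eq_dotProduct, dotProduct_smul, smul_eq_mul, ← pairR_eq_dotProduct]
  rcases eq_or_ne i j with rfl | hij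
  · simpa using hi x hx
  · simpa [hij] using mul_nonneg ht (by simpa [hij] using hv j x hx)

lemma exists_pairR_eq_neg_one_of_mem_extremePoints_nefDual {i : Fin r} {v : Fin d → ℝ}
    (hcpt : IsCompact (Δ i)) (h0 : (0 : Fin d → ℝ) ∈ Δ i)
    (hv : v ∈ (nefDual Δ i).extremePoints ℝ) (hv0 : v ≠ 0) : ∃ u ∈ Δ i, pairR u v = -1 := by
  obtain ⟨u, hu, hmin⟩ := hcpt.exists_isMinOn ⟨0, h0⟩
    (continuous_id.dotProduct continuous_const).continuousOn (f := fun x => pairR x v)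
  refine ⟨u, hu, ?_⟩
  set c := pairR u v
  have hc1 : -1 ≤ c := by simpa using hv.1 i u hu
  have hc0 : c ≤ 0 := (hmin h0).trans_eq (zero_dotProduct v)
  by_contra hne
  -- stretching `v` by `2 + c > 1` keeps it in `∇_i`, as `(2 + c) c = (1 + c)² - 1 ≥ -1`
  refine hv0 (eq_zero_of_mem_extremePoints_of_smul_mem hv (zero_mem_nefDual i)
    (t := 2 + c) (by linarith [lt_of_le_of_ne hc1 (Ne.symm hne)]) ?_)
  refine smul_mem_nefDual hv.1 (by linarith) fun x hx => ?_
  have hcx : (2 + c) * c ≤ (2 + c) * pairR x v :=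
    mul_le_mul_of_nonneg_left (hmin hx) (by linarith)
  nlinarith [sq_nonneg (1 + c)]

lemma mem_extremePoints_dualPoly_of_mem_extremePoints_nefDual
    (h0 : ∀ j, (0 : Fin d → ℝ) ∈ Δ j) {i : Fin r} {u v : Fin d → ℝ} (hu : u ∈ Δ i)
    (huv : pairR u v = -1) (hv : v ∈ (nefDual Δ i).extremePoints ℝ) :
    v ∈ (dualPoly (minkSum Δ)).extremePoints ℝ := by
  have hface : IsExtreme ℝ (dualPoly (minkSum Δ))
      {y ∈ dualPoly (minkSum Δ) | dotProductBilin ℝ ℝ u y = -1} :=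
    isExtreme_setOf_eq_of_forall_le _ fun y hy => hy u (mem_minkSum_of_mem h0 hu)
  refine hface.extremePoints_subset_extremePoints
    (inter_extremePoints_subset_extremePoints_of_subset (𝕜 := ℝ) ?_ ⟨?_, hv⟩)
  · exact fun y hy => mem_nefDual_of_pairR_eq_neg_one h0 hu hy.2 hy.1
  · exact ⟨nefDual_subset_dualPoly_minkSum i hv.1, huv⟩

lemma mem_extremePoints_nefDual_of_mem_extremePoints_dualPoly
    (h0 : ∀ j, (0 : Fin d → ℝ) ∈ Δ j) {i : Fin r} {u v : Fin d → ℝ} (hu : u ∈ Δ i)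
    (huv : pairR u v = -1) (hv : v ∈ (dualPoly (minkSum Δ)).extremePoints ℝ) :
    v ∈ (nefDual Δ i).extremePoints ℝ :=
  inter_extremePoints_subset_extremePoints_of_subset (nefDual_subset_dualPoly_minkSum i)
    ⟨mem_nefDual_of_pairR_eq_neg_one h0 hu huv hv.1, hv⟩

end NefPartition

/-- For dual centered nef-partitions, the nonzero vertices of `∇_i` are
exactly the vertices `v` of `Δ*` with `min_{u ∈ Δ_i} ⟨u,v⟩ = -1`. -/
theorem nef_partition_vertices {d r : ℕ}
    (Δ Nb : Fin r → Set (Fin d → ℝ))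
    (h : AreDualNefPartitions Δ Nb) :
    ∀ i : Fin r,
      {v | v ∈ Set.extremePoints ℝ (Nb i) ∧ v ≠ 0} =
      {v ∈ Set.extremePoints ℝ (dualPoly (minkSum Δ)) |
        (∀ u ∈ Δ i, -1 ≤ pairR u v) ∧ ∃ u ∈ Δ i, pairR u v = -1} := by
  obtain ⟨⟨hΔ, -, -⟩, -, hNb, -⟩ := h
  intro i
  have h0 : ∀ j, (0 : Fin d → ℝ) ∈ Δ j := fun j => (hΔ j).2
  have hcpt : IsCompact (Δ i) := by
    obtain ⟨V, -, -, hV⟩ := (hΔ i).1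
    exact hV ▸ V.finite_toSet.isCompact_convexHull (𝕜 := ℝ)
  rw [hNb i]
  ext v
  constructor
  · rintro ⟨hv, hv0⟩
    obtain ⟨u, hu, huv⟩ :=
      exists_pairR_eq_neg_one_of_mem_extremePoints_nefDual hcpt (h0 i) hv hv0
    exact ⟨mem_extremePoints_dualPoly_of_mem_extremePoints_nefDual h0 hu huv hv,
      fun x hx => by simpa using hv.1 i x hx, u, hu, huv⟩
  · rintro ⟨hv, -, u, hu, huv⟩
    refine ⟨mem_extremePoints_nefDual_of_mem_extremePoints_dualPoly h0 hu huv hv, ?_⟩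
    rintro rfl
    simp [pairR_eq_dotProduct] at huv
end
end

section
/- Let Δ_1, …, Δ_r and ∇_1, …, ∇_r be dual to each other centered nef-partitions in ℝ^d, with Δ = Δ_1 + ⋯ + Δ_r and Δ* = {y ∈ ℝ^d : ⟨x,y⟩ ≥ −1 for all x ∈ Δ}. Then every nonzero lattice point of Δ* is contained, for some i ∈ {1, …, r}, in a face of ∇_i that does not contain the origin. In particular, the number of lattice points satisfies |Δ* ∩ ℤ^d| = |∇_1 ∩ ℤ^d| + ⋯ + |∇_r ∩ ℤ^d| − r + 1. -/
open Pointwise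

noncomputable section

namespace NefAux

/-- `x ↦ pairR x y` as a linear map. -/
def pairL {n : ℕ} (y : Fin n → ℝ) : (Fin n → ℝ) →ₗ[ℝ] ℝ where
  toFun x := pairR x y
  map_add' a b := by simp [pairR, add_mul, Finset.sum_add_distrib]
  map_smul' c a := by simp [pairR, Finset.mul_sum, mul_assoc]

lemma pairL_apply {n : ℕ} (y x : Fin n → ℝ) : pairL y x = pairR x y := rfl

lemma pairR_zero_left {n : ℕ} (y : Fin n → ℝ) : pairR 0 y = 0 := by simp [pairR]

lemma pairR_zero_right {n : ℕ} (x : Fin n → ℝ) : pairR x 0 = 0 := by simp [pairR]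

lemma pairR_sum_left {n : ℕ} {ι : Type*} (s : Finset ι) (f : ι → Fin n → ℝ) (y : Fin n → ℝ) :
    pairR (∑ i ∈ s, f i) y = ∑ i ∈ s, pairR (f i) y := map_sum (pairL y) f s

lemma pairR_self_pos {n : ℕ} {v : Fin n → ℝ} (hv : v ≠ 0) : 0 < pairR v v := by
  obtain ⟨k, hk⟩ := Function.ne_iff.mp hv
  exact Finset.sum_pos' (fun j _ => mul_self_nonneg _)
    ⟨k, Finset.mem_univ _, mul_self_pos.mpr hk⟩

lemma pairR_int {n : ℕ} {x y : Fin n → ℝ} (hx : IsLatticePt x) (hy : IsLatticePt y) :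
    ∃ m : ℤ, pairR x y = (m : ℝ) := by
  choose a ha using hx
  choose b hb using hy
  exact ⟨∑ k, a k * b k, by simp [pairR, ha, hb]⟩

lemma min_le_pairR {n : ℕ} {V : Finset (Fin n → ℝ)} (hne : V.Nonempty) {y x : Fin n → ℝ}
    (hx : x ∈ convexHull ℝ (V : Set (Fin n → ℝ))) :
    V.inf' hne (fun w => pairR w y) ≤ pairR x y := by
  have hsub : convexHull ℝ (V : Set (Fin n → ℝ)) ⊆
      {z | V.inf' hne (fun w => pairR w y) ≤ pairL y z} :=
    convexHull_min (fun w hw => show _ ≤ pairR w y from Finset.inf'_le _ hw)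
      (convex_halfSpace_ge (pairL y).isLinear _)
  exact hsub hx

lemma eq_zero_of_pair_nonneg {d : ℕ} {S : Set (Fin d → ℝ)} {v : Fin d → ℝ}
    (h0 : (0 : Fin d → ℝ) ∈ interior S) (hS : ∀ x ∈ S, 0 ≤ pairR x v) : v = 0 := by
  by_contra hv
  obtain ⟨ε, hε, hball⟩ := Metric.mem_nhds_iff.mp (mem_interior_iff_mem_nhds.mp h0)
  have hvn : 0 < ‖v‖ := norm_pos_iff.mpr hv
  set c : ℝ := ε / (2 * ‖v‖) with hc
  have hcpos : 0 < c := by positivity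
  have hmem : -(c • v) ∈ Metric.ball (0 : Fin d → ℝ) ε := by
    rw [Metric.mem_ball, dist_zero_right, norm_neg, norm_smul, Real.norm_eq_abs,
      abs_of_pos hcpos, hc]
    rw [div_mul_eq_mul_div, mul_comm]
    rw [div_lt_iff₀ (by positivity)]
    nlinarith
  have hnn := hS _ (hball hmem)
  have : pairR (-(c • v)) v = -(c * pairR v v) := by
    have := (pairL v).map_neg (c • v)
    have h2 := (pairL v).map_smul c v
    simp only [pairL_apply] at this h2
    rw [this, h2]; rfl
  rw [this] at hnn
  nlinarith [pairR_self_pos hv]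

lemma sum_neg_ite {r : ℕ} (i : Fin r) :
    ∑ j : Fin r, -(if i = j then (1 : ℝ) else 0) = -1 := by
  simp [Finset.sum_ite_eq]

lemma nefDual_subset {d r : ℕ} (Δ : Fin r → Set (Fin d → ℝ)) (i : Fin r) :
    nefDual Δ i ⊆ dualPoly (minkSum Δ) := by
  rintro y hy x ⟨f, hf, rfl⟩
  rw [pairR_sum_left]
  calc (-1 : ℝ) = ∑ j : Fin r, -(if i = j then (1 : ℝ) else 0) := (sum_neg_ite i).symm
    _ ≤ ∑ j, pairR (f j) y := Finset.sum_le_sum (fun j _ => hy j _ (hf j))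

lemma zero_mem_nefDual {d r : ℕ} (Δ : Fin r → Set (Fin d → ℝ)) (i : Fin r) :
    (0 : Fin d → ℝ) ∈ nefDual Δ i := by
  intro j x hx
  rw [pairR_zero_right]
  split <;> norm_num

lemma nefDual_inter_eq_zero {d r : ℕ} {Δ : Fin r → Set (Fin d → ℝ)} {i j : Fin r}
    (hij : i ≠ j) (h0 : (0 : Fin d → ℝ) ∈ interior (minkSum Δ)) {v : Fin d → ℝ}
    (hvi : v ∈ nefDual Δ i) (hvj : v ∈ nefDual Δ j) : v = 0 := by
  apply eq_zero_of_pair_nonneg h0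
  rintro x ⟨f, hf, rfl⟩
  rw [pairR_sum_left]
  apply Finset.sum_nonneg
  intro k _
  have h1 := hvi k _ (hf k)
  have h2 := hvj k _ (hf k)
  by_cases hk : i = k
  · have hjk : ¬ (j = k) := fun hh => hij (hk.trans hh.symm)
    simpa [hjk] using h2
  · simpa [hk] using h1

lemma key {d r : ℕ} (Δ : Fin r → Set (Fin d → ℝ))
    (hpoly : ∀ i, IsLatticePoly (Δ i) ∧ (0 : Fin d → ℝ) ∈ Δ i)
    (h0 : (0 : Fin d → ℝ) ∈ interior (minkSum Δ))
    {v : Fin d → ℝ} (hv : IsLatticePt v) (hvD : v ∈ dualPoly (minkSum Δ)) (hv0 : v ≠ 0) :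
    ∃ i x0, x0 ∈ Δ i ∧ pairR x0 v = -1 ∧ v ∈ nefDual Δ i := by
  classical
  choose V hVne hVlat hVeq using fun i => (hpoly i).1
  choose w hwV hweq using fun i => Finset.exists_mem_eq_inf' (hVne i) (fun u => pairR u v)
  -- lower bound over each Δ i
  have hlow : ∀ i, ∀ x ∈ Δ i, pairR (w i) v ≤ pairR x v := by
    intro i x hx
    rw [← hweq i]
    exact min_le_pairR (hVne i) (by rwa [hVeq i] at hx)
  have hwΔ : ∀ i, w i ∈ Δ i := by
    intro i
    rw [hVeq i]
    exact subset_convexHull ℝ _ (hwV i)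
  choose z hz using fun i => pairR_int (hVlat i _ (hwV i)) hv
  have hznp : ∀ i, z i ≤ 0 := by
    intro i
    have := hlow i 0 (hpoly i).2
    rw [pairR_zero_left, hz i] at this
    exact_mod_cast this
  have hsumlb : (-1 : ℤ) ≤ ∑ i, z i := by
    have hmem : (∑ i, w i) ∈ minkSum Δ := ⟨w, hwΔ, rfl⟩
    have := hvD _ hmem
    rw [pairR_sum_left] at this
    have heq : ∑ i, pairR (w i) v = ((∑ i, z i : ℤ) : ℝ) := by
      push_cast
      exact Finset.sum_congr rfl (fun i _ => hz i)
    rw [heq] at this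
    exact_mod_cast this
  have hsumub : ∑ i, z i ≤ 0 := Finset.sum_nonpos (fun i _ => hznp i)
  have hcase : ∑ i, z i = 0 ∨ ∑ i, z i = -1 := by omega
  rcases hcase with hcase | hcase
  · -- all zero: contradiction with v ≠ 0
    exfalso
    have hall : ∀ i ∈ Finset.univ, z i = 0 :=
      (Finset.sum_eq_zero_iff_of_nonpos (fun i _ => hznp i)).mp hcase
    apply hv0
    apply eq_zero_of_pair_nonneg h0
    rintro x ⟨f, hf, rfl⟩
    rw [pairR_sum_left]
    apply Finset.sum_nonneg
    intro i _
    have := hlow i _ (hf i)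
    rw [hz i, hall i (Finset.mem_univ i)] at this
    simpa using this
  · -- exactly one index equals -1
    have hex : ∃ i, z i ≠ 0 := by
      by_contra hno
      push_neg at hno
      rw [Finset.sum_congr rfl (fun i _ => hno i)] at hcase
      simp at hcase
    obtain ⟨i, hi⟩ := hex
    have hizle : z i ≤ -1 := by have := hznp i; omega
    have hsplit : z i + ∑ j ∈ Finset.univ.erase i, z j = ∑ j, z j :=
      Finset.add_sum_erase _ _ (Finset.mem_univ i)
    have herase_np : ∑ j ∈ Finset.univ.erase i, z j ≤ 0 :=
      Finset.sum_nonpos (fun j _ => hznp j)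
    have herase0 : ∑ j ∈ Finset.univ.erase i, z j = 0 := by omega
    have hzi : z i = -1 := by omega
    have hzj : ∀ j, j ≠ i → z j = 0 := by
      intro j hj
      exact (Finset.sum_eq_zero_iff_of_nonpos (fun k _ => hznp k)).mp herase0 j
        (Finset.mem_erase.mpr ⟨hj, Finset.mem_univ j⟩)
    refine ⟨i, w i, hwΔ i, by rw [hz i, hzi]; norm_num, ?_⟩
    intro j x hx
    have hb := hlow j x hx
    by_cases hij : i = j
    · subst hij
      rw [hz i, hzi] at hb
      simpa using hb
    · rw [hz j, hzj j (fun hh => hij hh.symm)] at hb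
      simpa [hij] using hb

lemma finite_lattice_norm_le (d : ℕ) (C : ℝ) :
    {x : Fin d → ℝ | IsLatticePt x ∧ ‖x‖ ≤ C}.Finite := by
  classical
  apply Set.Finite.subset
    (Set.Finite.image (fun m : Fin d → ℤ => (fun k => (m k : ℝ)))
      (Finset.finite_toSet (Fintype.piFinset fun _ : Fin d => Finset.Icc (-⌈C⌉) ⌈C⌉)))
  rintro x ⟨hx, hxC⟩
  choose m hm using hx
  refine ⟨m, ?_, by funext k; exact (hm k).symm⟩
  rw [Finset.mem_coe, Fintype.mem_piFinset]
  intro k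
  rw [Finset.mem_Icc]
  have h1 : |(m k : ℝ)| ≤ (⌈C⌉ : ℝ) := by
    rw [← hm k]
    calc |x k| = ‖x k‖ := (Real.norm_eq_abs _).symm
      _ ≤ ‖x‖ := norm_le_pi_norm x k
      _ ≤ C := hxC
      _ ≤ (⌈C⌉ : ℝ) := Int.le_ceil C
  obtain ⟨hl, hr⟩ := abs_le.mp h1
  constructor <;> exact_mod_cast (by assumption_mod_cast : _)

lemma norm_le_of_mem_hull {n : ℕ} {V : Finset (Fin n → ℝ)} (hne : V.Nonempty)
    {x : Fin n → ℝ} (hx : x ∈ convexHull ℝ (V : Set (Fin n → ℝ))) :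
    ‖x‖ ≤ V.sup' hne (fun w => ‖w‖) := by
  have hsub : convexHull ℝ (V : Set (Fin n → ℝ)) ⊆
      Metric.closedBall 0 (V.sup' hne (fun w => ‖w‖)) :=
    convexHull_min
      (fun w hw => by
        rw [Metric.mem_closedBall, dist_zero_right]
        exact Finset.le_sup' _ hw)
      (convex_closedBall _ _)
  simpa [mem_closedBall_zero_iff] using hsub hx

end NefAux

open NefAux

/-- For dual centered nef-partitions, every nonzero lattice point of
`Δ*` lies in a face of some `∇_i` avoiding the origin; in particular
`|Δ* ∩ ℤ^d| = Σ_i |∇_i ∩ ℤ^d| - r + 1`. -/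
theorem nef_partition_lattice_point_count {d r : ℕ}
    (Δ Nb : Fin r → Set (Fin d → ℝ))
    (h : AreDualNefPartitions Δ Nb) :
    (∀ v : Fin d → ℝ, IsLatticePt v → v ∈ dualPoly (minkSum Δ) → v ≠ 0 →
      ∃ (i : Fin r) (F : Set (Fin d → ℝ)),
        IsExposed ℝ (Nb i) F ∧ (0 : Fin d → ℝ) ∉ F ∧ v ∈ F) ∧
    (dualPoly (minkSum Δ) ∩ {x | IsLatticePt x}).ncard + r =
      (∑ i, (Nb i ∩ {x | IsLatticePt x}).ncard) + 1 := by
  classical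
  obtain ⟨hΔp, hNbp, hNbdef, hΔdef⟩ := h
  obtain ⟨hΔi, hΔrefl, hΔuniq⟩ := hΔp
  obtain ⟨hΔlat, hΔ0int, hΔduallat⟩ := hΔrefl
  -- the core: each nonzero lattice point of Δ* lies in some ∇ i, with a witness x0
  have core : ∀ v : Fin d → ℝ, IsLatticePt v → v ∈ dualPoly (minkSum Δ) → v ≠ 0 →
      ∃ i x0, x0 ∈ Δ i ∧ pairR x0 v = -1 ∧ v ∈ Nb i := by
    intro v hv hvD hv0
    obtain ⟨i, x0, hx0, hpair, hmem⟩ := key Δ hΔi hΔ0int hv hvD hv0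
    exact ⟨i, x0, hx0, hpair, by rw [hNbdef]; exact hmem⟩
  constructor
  · -- part 1
    intro v hv hvD hv0
    obtain ⟨i, x0, hx0, hpair, hvNb⟩ := core v hv hvD hv0
    set l : (Fin d → ℝ) →L[ℝ] ℝ := LinearMap.toContinuousLinearMap (pairL (-x0)) with hl
    have hlval : ∀ z, l z = -(pairR x0 z) := by
      intro z
      show pairL (-x0) z = _
      simp [pairL, pairR, mul_comm]
    refine ⟨i, {y ∈ Nb i | ∀ z ∈ Nb i, l z ≤ l y}, fun _ => ⟨l, rfl⟩, ?_, ?_⟩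
    · intro hF
      rw [Set.mem_sep_iff] at hF
      have h1 := hF.2 v hvNb
      rw [hlval v, hlval 0, hpair, pairR_zero_right] at h1
      norm_num at h1
    · rw [Set.mem_sep_iff]
      refine ⟨hvNb, fun z hz => ?_⟩
      rw [hlval z, hlval v, hpair]
      have hzd : z ∈ nefDual Δ i := by rwa [hNbdef i] at hz
      have := hzd i x0 hx0
      simp only [if_pos rfl] at this
      norm_num at this
      linarith
  · -- part 2: counting
    obtain ⟨V, hVne, hVlat, hVeq⟩ := hΔduallat
    set C : ℝ := V.sup' hVne (fun w => ‖w‖) with hC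
    set A : Set (Fin d → ℝ) := dualPoly (minkSum Δ) ∩ {x | IsLatticePt x} with hA
    have hAfin : A.Finite := by
      apply (finite_lattice_norm_le d C).subset
      rintro x ⟨hx1, hx2⟩
      exact ⟨hx2, norm_le_of_mem_hull hVne (by rwa [← hVeq])⟩
    have hBsubA : ∀ i, Nb i ∩ {x | IsLatticePt x} ⊆ A := by
      intro i
      apply Set.inter_subset_inter_left
      rw [hNbdef]
      exact nefDual_subset Δ i
    have hBfin : ∀ i, (Nb i ∩ {x | IsLatticePt x}).Finite := fun i => hAfin.subset (hBsubA i)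
    have hzeroLat : IsLatticePt (0 : Fin d → ℝ) := fun k => ⟨0, by simp⟩
    have h0A : (0 : Fin d → ℝ) ∈ hAfin.toFinset := by
      rw [Set.Finite.mem_toFinset]
      exact ⟨fun x _ => by rw [pairR_zero_right]; norm_num, hzeroLat⟩
    have h0B : ∀ i, (0 : Fin d → ℝ) ∈ (hBfin i).toFinset := by
      intro i
      rw [Set.Finite.mem_toFinset]
      exact ⟨by rw [hNbdef]; exact zero_mem_nefDual Δ i, hzeroLat⟩
    have heq : hAfin.toFinset =
        insert 0 (Finset.univ.biUnion fun i => ((hBfin i).toFinset).erase 0) := by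
      apply Finset.ext
      intro x
      simp only [Finset.mem_insert, Finset.mem_biUnion, Finset.mem_univ, true_and,
        Finset.mem_erase, Set.Finite.mem_toFinset]
      constructor
      · rintro ⟨hxD, hxL⟩
        by_cases hx0 : x = 0
        · exact Or.inl hx0
        · obtain ⟨i, x0, -, -, hxNb⟩ := core x hxL hxD hx0
          exact Or.inr ⟨i, hx0, hxNb, hxL⟩
      · rintro (rfl | ⟨i, -, hxB⟩)
        · exact Set.Finite.mem_toFinset _ |>.mp h0A
        · exact hBsubA i hxB
    have hdisj : ∀ i ∈ Finset.univ, ∀ j ∈ Finset.univ, i ≠ j →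
        Disjoint (((hBfin i).toFinset).erase 0) (((hBfin j).toFinset).erase 0) := by
      intro i _ j _ hij
      rw [Finset.disjoint_left]
      intro a hai haj
      obtain ⟨ha0, hai'⟩ := Finset.mem_erase.mp hai
      obtain ⟨-, haj'⟩ := Finset.mem_erase.mp haj
      apply ha0
      have h1 : a ∈ nefDual Δ i := by
        have := (Set.Finite.mem_toFinset _ |>.mp hai').1
        rwa [hNbdef] at this
      have h2 : a ∈ nefDual Δ j := by
        have := (Set.Finite.mem_toFinset _ |>.mp haj').1
        rwa [hNbdef] at this
      exact nefDual_inter_eq_zero hij hΔ0int h1 h2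
    have hcard1 : hAfin.toFinset.card =
        (∑ i, (((hBfin i).toFinset).erase 0).card) + 1 := by
      rw [heq, Finset.card_insert_of_notMem (by simp), Finset.card_biUnion hdisj]
    have hcard2 : ∑ i, ((hBfin i).toFinset).card =
        (∑ i, (((hBfin i).toFinset).erase 0).card) + r := by
      calc ∑ i, ((hBfin i).toFinset).card
          = ∑ i, ((((hBfin i).toFinset).erase 0).card + 1) :=
            Finset.sum_congr rfl (fun i _ => (Finset.card_erase_add_one (h0B i)).symm)
        _ = (∑ i, (((hBfin i).toFinset).erase 0).card) + ∑ _i : Fin r, 1 :=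
            Finset.sum_add_distrib
        _ = (∑ i, (((hBfin i).toFinset).erase 0).card) + r := by simp
    have hAncard : A.ncard = hAfin.toFinset.card := Set.ncard_eq_toFinset_card A hAfin
    have hBncard : ∀ i, (Nb i ∩ {x | IsLatticePt x}).ncard = ((hBfin i).toFinset).card :=
      fun i => Set.ncard_eq_toFinset_card _ (hBfin i)
    rw [show (dualPoly (minkSum Δ) ∩ {x | IsLatticePt x}).ncard = A.ncard from rfl,
      hAncard, Finset.sum_congr rfl (fun i _ => hBncard i)]
    omega
end
end

section
/- Let P, Q ⊂ ℝ^d be lattice polytopes with dim P < dim(P+Q). Fix p ∈ P and let π : ℝ^d → ℝ^e be a surjective linear map whose kernel equals the linear span of P − p (projection along the affine hull of P). Then for every facet G of the polytope π(P+Q), the preimage (P+Q) ∩ π^{−1}(G) is a facet of P+Q. -/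
open Pointwise

noncomputable section

namespace FacetAux

variable {n m : ℕ}

lemma span_add_of_zero (S T : Set (Fin n → ℝ)) (hS : (0:Fin n → ℝ) ∈ S)
    (hT : (0:Fin n → ℝ) ∈ T) :
    Submodule.span ℝ (S + T) = Submodule.span ℝ S ⊔ Submodule.span ℝ T := by
  apply le_antisymm
  · rw [Submodule.span_le]
    rintro x ⟨s, hs, t, ht, rfl⟩
    exact Submodule.add_mem _ (Submodule.mem_sup_left (Submodule.subset_span hs))
      (Submodule.mem_sup_right (Submodule.subset_span ht))
  · refine sup_le ?_ ?_ <;> rw [Submodule.span_le] <;> intro x hx <;>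
      apply Submodule.subset_span
    · exact ⟨x, hx, 0, hT, add_zero x⟩
    · exact ⟨0, hS, x, hx, zero_add x⟩

lemma vectorSpan_add (A B : Set (Fin n → ℝ)) {a b : Fin n → ℝ}
    (ha : a ∈ A) (hb : b ∈ B) :
    vectorSpan ℝ (A + B) = vectorSpan ℝ A ⊔ vectorSpan ℝ B := by
  have hab : a + b ∈ A + B := ⟨a, ha, b, hb, rfl⟩
  rw [vectorSpan_eq_span_vsub_set_right ℝ hab, vectorSpan_eq_span_vsub_set_right ℝ ha,
    vectorSpan_eq_span_vsub_set_right ℝ hb]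
  have himg : (· -ᵥ (a + b)) '' (A + B) = ((· -ᵥ a) '' A) + ((· -ᵥ b) '' B) := by
    ext x
    constructor
    · rintro ⟨y, ⟨u, hu, v, hv, rfl⟩, rfl⟩
      exact ⟨u - a, ⟨u, hu, rfl⟩, v - b, ⟨v, hv, rfl⟩, by simp [vsub_eq_sub]; abel⟩
    · rintro ⟨_, ⟨u, hu, rfl⟩, _, ⟨v, hv, rfl⟩, rfl⟩
      exact ⟨u + v, ⟨u, hu, v, hv, rfl⟩, by simp [vsub_eq_sub]; abel⟩
  rw [himg]
  exact span_add_of_zero _ _ ⟨a, ha, by simp⟩ ⟨b, hb, by simp⟩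

lemma map_vectorSpan (f : (Fin n → ℝ) →ₗ[ℝ] (Fin m → ℝ)) (S : Set (Fin n → ℝ))
    {s : Fin n → ℝ} (hs : s ∈ S) :
    (vectorSpan ℝ S).map f = vectorSpan ℝ (f '' S) := by
  rw [vectorSpan_eq_span_vsub_set_right ℝ hs,
    vectorSpan_eq_span_vsub_set_right ℝ (Set.mem_image_of_mem f hs),
    Submodule.map_span]
  congr 1
  rw [Set.image_image, Set.image_image]
  refine Set.image_congr fun x _ => ?_
  simp [vsub_eq_sub]

set_option synthInstance.maxHeartbeats 1000000 in
lemma finrank_map_add_inf_ker (f : (Fin n → ℝ) →ₗ[ℝ] (Fin m → ℝ))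
    (W : Submodule ℝ (Fin n → ℝ)) :
    Module.finrank ℝ (W.map f) + Module.finrank ℝ ↥(LinearMap.ker f ⊓ W) =
      Module.finrank ℝ W := by
  have h := LinearMap.finrank_range_add_finrank_ker (f.comp W.subtype)
  have hker : LinearMap.ker (f.comp W.subtype) =
      (LinearMap.ker f ⊓ W).comap W.subtype := by
    ext x
    simp [LinearMap.mem_ker]
  have h1 : Module.finrank ℝ ↥(LinearMap.range (f.comp W.subtype)) =
      Module.finrank ℝ ↥(W.map f) := by
    have hr : LinearMap.range (f.comp W.subtype) = W.map f := by
      rw [LinearMap.range_comp, Submodule.range_subtype]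
    rw [hr]
  have h2 : Module.finrank ℝ ↥(LinearMap.ker (f.comp W.subtype)) =
      Module.finrank ℝ ↥(LinearMap.ker f ⊓ W) := by
    rw [hker]
    exact (Submodule.comapSubtypeEquivOfLe
      (inf_le_right : LinearMap.ker f ⊓ W ≤ W)).finrank_eq
  omega

end FacetAux

/-- If `P, Q` are lattice polytopes with `dim P < dim (P + Q)` and `π`
is the projection along the affine hull of `P`, then preimages of facets of `π(P+Q)` are
facets of `P + Q`. -/
theorem facet_preimage_of_projection {d e : ℕ}
    (P Q : Set (Fin d → ℝ))
    (hP : IsLatticePoly P) (hQ : IsLatticePoly Q)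
    (hdim : polyDim P < polyDim (P + Q))
    (p : Fin d → ℝ) (hp : p ∈ P)
    (pr : (Fin d → ℝ) →ₗ[ℝ] (Fin e → ℝ))
    (hsurj : Function.Surjective pr)
    (hker : LinearMap.ker pr = Submodule.span ℝ ((fun x => x - p) '' P)) :
    ∀ G : Set (Fin e → ℝ), IsFacetOf G (pr '' (P + Q)) →
      IsFacetOf ((P + Q) ∩ pr ⁻¹' G) (P + Q) := by

  intro G hG
  obtain ⟨hGexp, hGne, hGdim⟩ := hG
  obtain ⟨VQ, hVQne, -, hQe⟩ := hQ
  obtain ⟨q, hqV⟩ := hVQne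
  have hq : q ∈ Q := hQe ▸ subset_convexHull ℝ _ hqV
  -- pr is constant on P
  have hprP : ∀ a ∈ P, pr a = pr p := by
    intro a ha
    have h1 : a - p ∈ LinearMap.ker pr := by
      rw [hker]; exact Submodule.subset_span ⟨a, ha, rfl⟩
    have h2 : pr a - pr p = 0 := by rw [← map_sub]; exact h1
    exact sub_eq_zero.mp h2
  -- the preimage set equals a Minkowski sum
  set QG : Set (Fin d → ℝ) := {b | b ∈ Q ∧ pr p + pr b ∈ G} with hQGdef
  have hF : (P + Q) ∩ pr ⁻¹' G = P + QG := by
    ext x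
    constructor
    · rintro ⟨⟨a, ha, b, hb, rfl⟩, hxG⟩
      refine ⟨a, ha, b, ⟨hb, ?_⟩, rfl⟩
      have : pr (a + b) ∈ G := hxG
      rwa [map_add, hprP a ha] at this
    · rintro ⟨a, ha, b, ⟨hb, hbG⟩, rfl⟩
      refine ⟨⟨a, ha, b, hb, rfl⟩, ?_⟩
      show pr (a + b) ∈ G
      rw [map_add, hprP a ha]; exact hbG
  -- nonemptiness of the preimage
  have hFne : ((P + Q) ∩ pr ⁻¹' G).Nonempty := by
    obtain ⟨z, hz⟩ := hGne
    obtain ⟨x, hx, rfl⟩ := hGexp.subset hz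
    exact ⟨x, hx, hz⟩
  have hQGne : QG.Nonempty := by
    obtain ⟨x, hx⟩ := hFne
    rw [hF] at hx
    obtain ⟨a, -, b, hb, -⟩ := hx
    exact ⟨b, hb⟩
  obtain ⟨b₀, hb₀⟩ := hQGne
  -- image of the preimage is G
  have hFG : pr '' ((P + Q) ∩ pr ⁻¹' G) = G := by
    apply Set.Subset.antisymm
    · rintro _ ⟨x, ⟨-, hx2⟩, rfl⟩; exact hx2
    · intro z hz
      obtain ⟨x, hx, rfl⟩ := hGexp.subset hz
      exact ⟨x, ⟨hx, hz⟩, rfl⟩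
  -- exposedness
  have hexp : IsExposed ℝ (P + Q) ((P + Q) ∩ pr ⁻¹' G) := by
    intro _
    obtain ⟨l, hl⟩ := hGexp hGne
    refine ⟨l.comp (LinearMap.toContinuousLinearMap pr), ?_⟩
    ext x
    simp only [Set.mem_inter_iff, Set.mem_preimage, Set.mem_setOf_eq,
      ContinuousLinearMap.comp_apply, LinearMap.coe_toContinuousLinearMap']
    constructor
    · rintro ⟨hx, hxG⟩
      refine ⟨hx, fun y hy => ?_⟩
      rw [hl] at hxG
      exact hxG.2 (pr y) ⟨y, hy, rfl⟩
    · rintro ⟨hx, hmax⟩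
      refine ⟨hx, ?_⟩
      rw [hl]
      exact ⟨⟨x, hx, rfl⟩, by rintro _ ⟨y, hy, rfl⟩; exact hmax y hy⟩
  refine ⟨hexp, hFne, ?_⟩
  -- dimension count
  have hkerP : LinearMap.ker pr = vectorSpan ℝ P := by
    rw [hker, vectorSpan_eq_span_vsub_set_right ℝ hp]
    congr 1
  have hPQmem : p + q ∈ P + Q := ⟨p, hp, q, hq, rfl⟩
  have hinf1 : LinearMap.ker pr ⊓ vectorSpan ℝ (P + Q) = vectorSpan ℝ P := by
    rw [hkerP]
    exact inf_eq_left.mpr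
      ((FacetAux.vectorSpan_add P Q hp hq) ▸ (le_sup_left : vectorSpan ℝ P ≤ _))
  have hinf2 : LinearMap.ker pr ⊓ vectorSpan ℝ (P + QG) = vectorSpan ℝ P := by
    rw [hkerP]
    exact inf_eq_left.mpr
      ((FacetAux.vectorSpan_add P QG hp hb₀) ▸ (le_sup_left : vectorSpan ℝ P ≤ _))
  have e1 := FacetAux.finrank_map_add_inf_ker pr (vectorSpan ℝ (P + Q))
  have e2 := FacetAux.finrank_map_add_inf_ker pr (vectorSpan ℝ (P + QG))
  rw [hinf1, FacetAux.map_vectorSpan pr _ hPQmem] at e1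
  have hPQGmem : p + b₀ ∈ P + QG := ⟨p, hp, b₀, hb₀, rfl⟩
  rw [hinf2, FacetAux.map_vectorSpan pr _ hPQGmem, ← hF, hFG] at e2
  have hdir : ∀ (k : ℕ) (S : Set (Fin k → ℝ)),
      polyDim S = Module.finrank ℝ (vectorSpan ℝ S) := by
    intro k S
    rw [polyDim, direction_affineSpan]
  simp only [hdir] at hGdim
  have key : Module.finrank ℝ ↥(vectorSpan ℝ (P + QG)) + 1
      = Module.finrank ℝ ↥(vectorSpan ℝ (P + Q)) := by
    rw [hF] at e2
    omega
  rw [hdir, hdir, hF]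
  exact key
end
end

section
/- Let P, Q ⊂ ℝ^d be lattice polytopes such that P + Q is a d-dimensional reflexive polytope with unique interior lattice point m. Suppose P contains a lattice point p₀ in its relative interior. Then m − p₀ ∈ Q, so that P and Q form a nef-partition of P + Q of length 2. Furthermore, setting P' := P − p₀ and Q' := Q − (m − p₀), one has Q' ∩ lin(P') = {0}, 0 lies in the relative interior of Q', and lin(P') ∩ lin(Q') = {0} with lin(P') + lin(Q') = ℝ^d (lin(·) denoting the linear span). -/
open Pointwise

noncomputable section

/-! After translating, `Δ = P₁ + Q₁` is reflexive with `0 ∈ relint P₁`; put `L = lin P₁`.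
A vertex `ν` of `Δ*` is a lattice point, so on the lattice polytope `P₁` the functional `⟨·, ν⟩`
either vanishes identically (because `0 ∈ relint P₁`) or takes a value `≤ -1`; in the second case
`⟨p + q, ν⟩ ≥ -1` forces `⟨q, ν⟩ ≥ 0` on `Q₁`. So a point of `Q₁ ∩ L` is nonnegative on all of
`Δ*`, which for bounded `Δ` means it is `0`.

The rest is convex geometry: `0 ∈ int Δ ⊆ int (L + Q₁)` and `L ∩ Q₁ = {0}` give, for each
`q ∈ Q₁`, some `-δ q ∈ Q₁`. Hence the cone over `Q₁` is its whole span, which therefore meets `L`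
only in `0`, and `Q₁` is a neighbourhood of `0` in that span. -/
open Set Filter Topology Submodule

section Translation

variable {E : Type*} [AddCommGroup E]

theorem image_sub_const_eq_vadd (s : Set E) (c : E) : (fun x => x - c) '' s = -c +ᵥ s := by
  simp only [← image_vadd, vadd_eq_add, neg_add_eq_sub]

theorem intrinsicInterior_vadd [TopologicalSpace E] [IsTopologicalAddGroup E] [Module ℝ E]
    (c : E) (s : Set E) : intrinsicInterior ℝ (c +ᵥ s) = c +ᵥ intrinsicInterior ℝ s := by
  rw [← image_vadd, ← image_vadd]
  exact ContinuousAffineEquiv.intrinsicInterior_image (ContinuousAffineEquiv.constVAdd ℝ E c) s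

end Translation

section ConvexGeometry

variable {E : Type*} [NormedAddCommGroup E] [NormedSpace ℝ E] {K : Set E} {L : Submodule ℝ E}

theorem exists_pos_neg_smul_mem_of_zero_mem_intrinsicInterior {s : Set E}
    (h0 : (0 : E) ∈ intrinsicInterior ℝ s) {x : E} (hx : x ∈ s) : ∃ δ > (0 : ℝ), -δ • x ∈ s := by
  obtain ⟨y, hy, hy0⟩ := mem_intrinsicInterior.mp h0
  have hline (t : ℝ) : t • x ∈ affineSpan ℝ s := by
    have h := AffineMap.lineMap_mem t (hy0 ▸ y.2) (subset_affineSpan ℝ s hx)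
    rwa [AffineMap.lineMap_apply_module, smul_zero, zero_add] at h
  let γ : ℝ → affineSpan ℝ s := fun t => ⟨t • x, hline t⟩
  have hγ : Tendsto γ (𝓝[<] 0) (𝓝 y) := by
    refine (Continuous.tendsto' ?_ 0 y (Subtype.ext ?_)).mono_left nhdsWithin_le_nhds
    · exact (continuous_id.smul continuous_const).subtype_mk _
    · simp [γ, hy0]
  obtain ⟨t, hts, ht⟩ :=
    ((hγ.eventually (mem_interior_iff_mem_nhds.mp hy)).and self_mem_nhdsWithin).exists
  exact ⟨-t, neg_pos.mpr ht, by simpa [γ] using hts⟩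

theorem zero_mem_of_zero_mem_add_submodule (hKL : ∀ q ∈ K, q ∈ L → q = 0)
    (h0 : (0 : E) ∈ (L : Set E) + K) : (0 : E) ∈ K := by
  obtain ⟨l, hl, q, hq, hlq⟩ := h0
  have hqL : q ∈ L := by simpa [eq_neg_of_add_eq_zero_right hlq] using L.neg_mem hl
  simpa [hKL q hq hqL] using hq

theorem exists_pos_neg_smul_mem_of_zero_mem_interior_add (hK : Convex ℝ K)
    (hKL : ∀ q ∈ K, q ∈ L → q = 0) (h0 : (0 : E) ∈ interior ((L : Set E) + K)) {q : E}
    (hq : q ∈ K) : ∃ δ > (0 : ℝ), -δ • q ∈ K := by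
  obtain ⟨δ, hδ, l, hl, q', hq', hsum : l + q' = -δ • q⟩ :=
    exists_pos_neg_smul_mem_of_zero_mem_intrinsicInterior (interior_subset_intrinsicInterior h0)
      (by simpa using add_mem_add L.zero_mem hq)
  -- this convex combination of `q'` and `q` lies in `L ∩ K = {0}`
  have hz : (1 + δ)⁻¹ • q' + (δ * (1 + δ)⁻¹) • q ∈ K :=
    hK hq' hq (by positivity) (by positivity) (by field_simp)
  have hzl : (1 + δ)⁻¹ • q' + (δ * (1 + δ)⁻¹) • q = -((1 + δ)⁻¹ • l) := by
    rw [eq_sub_of_add_eq' hsum]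
    module
  have hl0 : l = 0 := by
    have := hKL _ hz (hzl ▸ L.neg_mem (L.smul_mem _ hl))
    rw [hzl, neg_eq_zero, smul_eq_zero] at this
    exact this.resolve_left (by positivity)
  exact ⟨δ, hδ, by rwa [← hsum, hl0, zero_add]⟩

theorem Convex.span_subset_hull (hK : Convex ℝ K) (h0K : (0 : E) ∈ K)
    (hneg : ∀ q ∈ K, ∃ δ > (0 : ℝ), -δ • q ∈ K) : (span ℝ K : Set E) ⊆ ConvexCone.hull ℝ K := by
  intro x hx
  induction hx using Submodule.span_induction with
  | mem y hy => exact ConvexCone.subset_hull hy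
  | zero => exact ConvexCone.subset_hull h0K
  | add y z _ _ hy hz => exact (ConvexCone.hull ℝ K).add_mem hy hz
  | smul c y _ hy =>
    rcases lt_trichotomy c 0 with hc | rfl | hc
    · obtain ⟨t, ht, k, hk, rfl⟩ := (ConvexCone.mem_hull_of_convex hK).1 hy
      obtain ⟨δ, hδ, hδk⟩ := hneg k hk
      have hpos : 0 < -c * t / δ := by have := neg_pos.2 hc; positivity
      have hct : c • t • k = (-c * t / δ) • -δ • k := by
        rw [smul_smul, smul_smul]
        congr 1
        field_simp
      show c • t • k ∈ ConvexCone.hull ℝ K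
      rw [hct]
      exact (ConvexCone.hull ℝ K).smul_mem hpos (ConvexCone.subset_hull hδk)
    · simpa using ConvexCone.subset_hull h0K
    · exact (ConvexCone.hull ℝ K).smul_mem hc hy

theorem inf_span_eq_bot_of_zero_mem_interior_add (hK : Convex ℝ K)
    (hKL : ∀ q ∈ K, q ∈ L → q = 0) (h0 : (0 : E) ∈ interior ((L : Set E) + K)) :
    L ⊓ span ℝ K = ⊥ := by
  have h0K := zero_mem_of_zero_mem_add_submodule hKL (interior_subset h0)
  refine eq_bot_iff.2 fun x hx => ?_
  obtain ⟨t, ht, k, hk, rfl⟩ := (ConvexCone.mem_hull_of_convex hK).1 <| hK.span_subset_hull h0K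
    (fun q hq => exists_pos_neg_smul_mem_of_zero_mem_interior_add hK hKL h0 hq) hx.2
  have hkL : k ∈ L := by simpa [ht.ne'] using L.smul_mem t⁻¹ hx.1
  simp [hKL k hk hkL]

theorem zero_mem_intrinsicInterior_of_zero_mem_interior_add (hLK : L ⊓ span ℝ K = ⊥)
    (h0 : (0 : E) ∈ interior ((L : Set E) + K)) : (0 : E) ∈ intrinsicInterior ℝ K := by
  have hsub : ∀ x ∈ span ℝ K, x ∈ (L : Set E) + K → x ∈ K := by
    rintro x hx ⟨l, hl, k, hk, rfl⟩
    have hl' : l ∈ L ⊓ span ℝ K := ⟨hl, by simpa using sub_mem hx (subset_span hk : k ∈ span ℝ K)⟩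
    rw [hLK, Submodule.mem_bot] at hl'
    simpa [hl'] using hk
  have h0K : (0 : E) ∈ K := hsub 0 (zero_mem _) (interior_subset h0)
  refine mem_intrinsicInterior.2 ⟨⟨0, subset_affineSpan ℝ K h0K⟩, mem_interior.2 ?_, rfl⟩
  exact ⟨Subtype.val ⁻¹' interior ((L : Set E) + K),
    fun y hy => hsub y (affineSpan_subset_span y.2) (interior_subset hy),
    isOpen_interior.preimage continuous_subtype_val, h0⟩

theorem sup_span_eq_top_of_zero_mem_interior_add (h0 : (0 : E) ∈ interior ((L : Set E) + K)) :
    L ⊔ span ℝ K = ⊤ := by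
  refine (L ⊔ span ℝ K).eq_top_of_nonempty_interior' ⟨0, interior_mono ?_ h0⟩
  rw [Submodule.coe_sup]
  exact add_subset_add_left (subset_span : K ⊆ span ℝ K)

end ConvexGeometry

section Lattice

variable {n : ℕ}

theorem IsLatticePt.add {x y : Fin n → ℝ} (hx : IsLatticePt x) (hy : IsLatticePt y) :
    IsLatticePt (x + y) := fun k => by
  obtain ⟨a, ha⟩ := hx k
  obtain ⟨b, hb⟩ := hy k
  exact ⟨a + b, by simp [ha, hb]⟩

theorem IsLatticePt.neg {x : Fin n → ℝ} (hx : IsLatticePt x) : IsLatticePt (-x) := fun k => by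
  obtain ⟨a, ha⟩ := hx k
  exact ⟨-a, by simp [ha]⟩

theorem IsLatticePt.dotProduct_eq_intCast {x y : Fin n → ℝ} (hx : IsLatticePt x)
    (hy : IsLatticePt y) : ∃ k : ℤ, x ⬝ᵥ y = k := by
  choose a ha using hx
  choose b hb using hy
  exact ⟨∑ k, a k * b k, by simp [dotProduct, ha, hb]⟩

theorem isLinearMap_dotProduct_left (ν : Fin n → ℝ) : IsLinearMap ℝ (· ⬝ᵥ ν) :=
  ⟨fun x y => add_dotProduct x y ν, fun c x => smul_dotProduct c x ν⟩

theorem isLinearMap_dotProduct_right (x : Fin n → ℝ) : IsLinearMap ℝ (x ⬝ᵥ ·) :=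
  ⟨dotProduct_add x, fun c ν => dotProduct_smul c x ν⟩

theorem IsLatticePoly.convex {P : Set (Fin n → ℝ)} (hP : IsLatticePoly P) : Convex ℝ P := by
  obtain ⟨V, -, -, rfl⟩ := hP
  exact convex_convexHull ℝ _

theorem IsLatticePoly.isCompact {P : Set (Fin n → ℝ)} (hP : IsLatticePoly P) : IsCompact P := by
  obtain ⟨V, -, -, rfl⟩ := hP
  exact V.finite_toSet.isCompact_convexHull (𝕜 := ℝ)

theorem IsLatticePoly.vadd {P : Set (Fin n → ℝ)} (hP : IsLatticePoly P) {c : Fin n → ℝ}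
    (hc : IsLatticePt c) : IsLatticePoly (c +ᵥ P) := by
  classical
  obtain ⟨V, hV, hVlat, rfl⟩ := hP
  refine ⟨c +ᵥ V, hV.vadd_finset, ?_, by rw [Finset.coe_vadd_finset, convexHull_vadd]⟩
  simp only [Finset.mem_vadd_finset, vadd_eq_add]
  rintro _ ⟨v, hv, rfl⟩
  exact hc.add (hVlat v hv)

theorem eq_zero_of_forall_mem_dualPoly_nonneg {Δ : Set (Fin n → ℝ)} (hΔ : IsCompact Δ)
    {z : Fin n → ℝ} (hz : ∀ ν ∈ dualPoly Δ, 0 ≤ z ⬝ᵥ ν) : z = 0 := by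
  obtain ⟨b, hb⟩ := hΔ.bddAbove_image (f := (· ⬝ᵥ z)) (Continuous.continuousOn (by fun_prop))
  set c := max b 1
  have hc : 0 < c := lt_max_of_lt_right one_pos
  have hν : -c⁻¹ • z ∈ dualPoly Δ := fun x hx => by
    have hxz : x ⬝ᵥ z ≤ c := (hb ⟨x, hx, rfl⟩).trans (le_max_left b 1)
    change -1 ≤ x ⬝ᵥ (-c⁻¹ • z)
    rw [dotProduct_smul, smul_eq_mul, neg_mul, neg_le_neg_iff, inv_mul_le_iff₀ hc, mul_one]
    exact hxz
  have hzz : z ⬝ᵥ z ≤ 0 := by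
    have := hz _ hν
    rw [dotProduct_smul, smul_eq_mul, neg_mul, neg_nonneg] at this
    exact nonpos_of_mul_nonpos_right this (inv_pos.2 hc)
  exact dotProduct_self_eq_zero.1 (le_antisymm hzz (by simpa using dotProduct_self_star_nonneg z))

theorem IsLatticePoly.forall_dotProduct_eq_zero_or_exists_le_neg_one {P : Set (Fin n → ℝ)}
    (hP : IsLatticePoly P) (h0 : (0 : Fin n → ℝ) ∈ intrinsicInterior ℝ P)
    {ν : Fin n → ℝ} (hν : IsLatticePt ν) : (∀ p ∈ P, p ⬝ᵥ ν = 0) ∨ ∃ p ∈ P, p ⬝ᵥ ν ≤ -1 := by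
  obtain ⟨V, -, hVlat, rfl⟩ := hP
  by_cases hV : ∀ v ∈ V, 0 ≤ v ⬝ᵥ ν
  · left
    have hnonneg : ∀ p ∈ convexHull ℝ (V : Set (Fin n → ℝ)), 0 ≤ p ⬝ᵥ ν := fun p hp =>
      convexHull_min hV (convex_halfSpace_ge (isLinearMap_dotProduct_left ν) 0) hp
    intro p hp
    obtain ⟨δ, hδ, hδp⟩ := exists_pos_neg_smul_mem_of_zero_mem_intrinsicInterior h0 hp
    have hδν := hnonneg _ hδp
    rw [smul_dotProduct, smul_eq_mul, neg_mul, neg_nonneg] at hδν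
    exact le_antisymm (nonpos_of_mul_nonpos_right hδν hδ) (hnonneg p hp)
  · right
    simp only [not_forall, not_le] at hV
    obtain ⟨v, hv, hvν⟩ := hV
    obtain ⟨k, hk⟩ := (hVlat v hv).dotProduct_eq_intCast hν
    refine ⟨v, subset_convexHull ℝ _ hv, ?_⟩
    rw [hk] at hvν ⊢
    have : k ≤ -1 := Int.le_sub_one_of_lt (by exact_mod_cast hvν)
    exact_mod_cast this

theorem IsReflexivePoly.eq_zero_of_mem_right_of_mem_span_left {P Q : Set (Fin n → ℝ)}
    (hΔ : IsReflexivePoly (P + Q)) (hP : IsLatticePoly P)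
    (h0P : (0 : Fin n → ℝ) ∈ intrinsicInterior ℝ P) {q : Fin n → ℝ} (hq : q ∈ Q)
    (hqP : q ∈ span ℝ P) : q = 0 := by
  obtain ⟨hΔlat, -, V, -, hVlat, hV⟩ := hΔ
  refine eq_zero_of_forall_mem_dualPoly_nonneg hΔlat.isCompact fun ν hν => ?_
  rw [hV] at hν
  refine convexHull_min (fun ν hνV => ?_)
    (convex_halfSpace_ge (isLinearMap_dotProduct_right q) 0) hν
  rcases hP.forall_dotProduct_eq_zero_or_exists_le_neg_one h0P (hVlat ν hνV) with
    hzero | ⟨p, hp, hpν⟩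
  · have hker : span ℝ P ≤ LinearMap.ker ((dotProductBilin ℝ ℝ).flip ν) :=
      span_le.2 fun p hp => by simpa using hzero p hp
    simpa using (hker hqP).symm.le
  · have hpq : -1 ≤ (p + q) ⬝ᵥ ν := (hV ▸ subset_convexHull ℝ _ hνV : ν ∈ dualPoly (P + Q)) _
      (add_mem_add hp hq)
    rw [add_dotProduct] at hpq
    show 0 ≤ q ⬝ᵥ ν
    linarith

end Lattice

theorem minkowski_summand_reflexive_general {d : ℕ}
    (P Q : Set (Fin d → ℝ))
    (hP : IsLatticePoly P) (hQ : IsLatticePoly Q)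
    (m : Fin d → ℝ)
    (href : IsReflexivePoly ((fun x => x - m) '' (P + Q)))
    (p₀ : Fin d → ℝ) (hp₀ : IsLatticePt p₀)
    (hp₀P : p₀ ∈ intrinsicInterior ℝ P) :
    m - p₀ ∈ Q ∧
    ((fun x => x - (m - p₀)) '' Q) ∩
        (Submodule.span ℝ ((fun x => x - p₀) '' P) : Set (Fin d → ℝ)) = {0} ∧
    (0 : Fin d → ℝ) ∈ intrinsicInterior ℝ ((fun x => x - (m - p₀)) '' Q) ∧
    Submodule.span ℝ ((fun x => x - p₀) '' P) ⊓
      Submodule.span ℝ ((fun x => x - (m - p₀)) '' Q) = ⊥ ∧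
    Submodule.span ℝ ((fun x => x - p₀) '' P) ⊔
      Submodule.span ℝ ((fun x => x - (m - p₀)) '' Q) = ⊤ := by
  simp only [image_sub_const_eq_vadd] at href ⊢
  rw [← add_sub_cancel p₀ m, neg_add, ← vadd_add_vadd] at href
  set L := span ℝ (-p₀ +ᵥ P)
  have h0P : (0 : Fin d → ℝ) ∈ intrinsicInterior ℝ (-p₀ +ᵥ P) := by
    rw [intrinsicInterior_vadd]
    exact ⟨p₀, hp₀P, neg_add_cancel p₀⟩
  have hQL : ∀ q ∈ -(m - p₀) +ᵥ Q, q ∈ L → q = 0 := fun q hq hqL =>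
    href.eq_zero_of_mem_right_of_mem_span_left (hP.vadd hp₀.neg) h0P hq hqL
  have h0 : (0 : Fin d → ℝ) ∈ interior ((L : Set (Fin d → ℝ)) + (-(m - p₀) +ᵥ Q)) :=
    interior_mono (add_subset_add_right subset_span) href.2.1
  have h0Q : (0 : Fin d → ℝ) ∈ -(m - p₀) +ᵥ Q :=
    zero_mem_of_zero_mem_add_submodule hQL (interior_subset h0)
  have hLM := inf_span_eq_bot_of_zero_mem_interior_add (hQ.convex.vadd _) hQL h0
  refine ⟨by simpa [mem_vadd_set_iff_neg_vadd_mem] using h0Q,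
    eq_singleton_iff_unique_mem.2 ⟨⟨h0Q, L.zero_mem⟩, fun q hq => hQL q hq.1 hq.2⟩,
    zero_mem_intrinsicInterior_of_zero_mem_interior_add hLM h0, hLM,
    sup_span_eq_top_of_zero_mem_interior_add h0⟩

/-- If `P + Q` is a `d`-dimensional reflexive polytope with unique
interior lattice point `m` and `P` contains a lattice point `p₀` in its relative
interior, then `m - p₀ ∈ Q` (so `P, Q` form a nef-partition of length `2`), and after
translating (`P' = P - p₀`, `Q' = Q - (m - p₀)`) one has `Q' ∩ lin(P') = {0}`, `0` lies
in the relative interior of `Q'`, and the linear spans of `P'` and `Q'` split `ℝ^d`. -/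
theorem minkowski_summand_reflexive {d : ℕ}
    (P Q : Set (Fin d → ℝ))
    (hP : IsLatticePoly P) (hQ : IsLatticePoly Q)
    (m : Fin d → ℝ) (hm : IsLatticePt m)
    (href : IsReflexivePoly ((fun x => x - m) '' (P + Q)))
    (hd : polyDim (P + Q) = d)
    (p₀ : Fin d → ℝ) (hp₀ : IsLatticePt p₀)
    (hp₀P : p₀ ∈ intrinsicInterior ℝ P) :
    m - p₀ ∈ Q ∧
    ((fun x => x - (m - p₀)) '' Q) ∩
        (Submodule.span ℝ ((fun x => x - p₀) '' P) : Set (Fin d → ℝ)) = {0} ∧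
    (0 : Fin d → ℝ) ∈ intrinsicInterior ℝ ((fun x => x - (m - p₀)) '' Q) ∧
    Submodule.span ℝ ((fun x => x - p₀) '' P) ⊓
      Submodule.span ℝ ((fun x => x - (m - p₀)) '' Q) = ⊥ ∧
    Submodule.span ℝ ((fun x => x - p₀) '' P) ⊔
      Submodule.span ℝ ((fun x => x - (m - p₀)) '' Q) = ⊤ :=
  minkowski_summand_reflexive_general P Q hP hQ m href p₀ hp₀ hp₀P
end
end
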